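/- arXiv:1903.02836 — 3 statements merged into one kernel-verified Lean document; each statement's English description precedes it below -/
import Mathlib

section
/- Let n be even and 1 ≤ m ≤ n/2. For the function J_m(x) = (x_1 x_3 ⋯ x_{2m−1})/(x_2 x_4 ⋯ x_{2m}) and every x in the positive orthant (0,∞)^n, the log-canonical Poisson bracket satisfies {J_m, x_j}(x) = J_m(x) x_j if j ≤ 2m, and {J_m, x_j}(x) = 0 if j > 2m. -/
/-!
`J_m` is the Laurent monomial `∏ x_k ^ ε_k` with `ε_k = (-1)^k` for `k < 2m` and `ε_k = 0`
otherwise, so `x_i ∂J_m/∂x_i = ε_i J_m`. The bracket with a coordinate is therefore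
`{J_m, x_j} = x_j J_m (∑_{i<j} ε_i - ∑_{i>j} ε_i)`, and since the `ε_i` sum to zero over an even
number of indices this is `x_j J_m (2 ∑_{i<j} ε_i + ε_j)`. The alternating partial sum
`∑_{i<j} ε_i` is `1` when `j < 2m` is odd and `0` otherwise, which leaves `x_j J_m [j < 2m]`.
-/

/-- Partial derivative `∂f/∂x_i` of a function on `ℝⁿ`. -/
noncomputable def pd {n : ℕ} (f : (Fin n → ℝ) → ℝ) (x : Fin n → ℝ) (i : Fin n) : ℝ :=
  fderiv ℝ f x (Pi.single i 1)

/-- The log-canonical Poisson bracket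
`{f,g}(x) = Σ_{i<j} x_i x_j (∂f/∂x_i ∂g/∂x_j − ∂f/∂x_j ∂g/∂x_i)`. -/
noncomputable def pb {n : ℕ} (f g : (Fin n → ℝ) → ℝ) (x : Fin n → ℝ) : ℝ :=
  ∑ i : Fin n, ∑ j : Fin n,
    if i < j then x i * x j * (pd f x i * pd g x j - pd f x j * pd g x i) else 0

/-- `J_m(x) = (x_1 x_3 ⋯ x_{2m−1})/(x_2 x_4 ⋯ x_{2m})` (1-based; here indices are 0-based,
so the numerator ranges over even indices `< 2m` and the denominator over odd indices `< 2m`). -/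
noncomputable def Jfun {n : ℕ} (m : ℕ) (x : Fin n → ℝ) : ℝ :=
  (∏ i ∈ Finset.univ.filter (fun i : Fin n => i.val < 2*m ∧ Even i.val), x i) /
  (∏ i ∈ Finset.univ.filter (fun i : Fin n => i.val < 2*m ∧ Odd i.val), x i)

/-- `I_m(x) = (x_{2m+2} x_{2m+4} ⋯ x_n)/(x_{2m+1} x_{2m+3} ⋯ x_{n−1})` (1-based; here 0-based:
numerator over odd indices `≥ 2m`, denominator over even indices `≥ 2m`). -/
noncomputable def Ifun {n : ℕ} (m : ℕ) (x : Fin n → ℝ) : ℝ :=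
  (∏ i ∈ Finset.univ.filter (fun i : Fin n => 2*m ≤ i.val ∧ Odd i.val), x i) /
  (∏ i ∈ Finset.univ.filter (fun i : Fin n => 2*m ≤ i.val ∧ Even i.val), x i)

/-- `v_m(x) = a_1 x_1 + ⋯ + a_m x_m` (sum of the first `m` coordinates, 0-based indices `< m`). -/
def vfun {n : ℕ} (a : Fin n → ℝ) (m : ℕ) (x : Fin n → ℝ) : ℝ :=
  ∑ j ∈ Finset.univ.filter (fun j : Fin n => j.val < m), a j * x j

/-- `F_m = v_{2m} I_m`. -/
noncomputable def Ffun {n : ℕ} (a : Fin n → ℝ) (m : ℕ) (x : Fin n → ℝ) : ℝ :=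
  vfun a (2*m) x * Ifun m x

/-- The Hamiltonian `H(x) = Σ_i (a_i x_i + k_i log x_i)`. -/
noncomputable def Hfun {n : ℕ} (a k : Fin n → ℝ) (x : Fin n → ℝ) : ℝ :=
  ∑ i, (a i * x i + k i * Real.log (x i))

open Finset

section LogCanonical

variable {n : ℕ}

lemma pd_coord (j : Fin n) (x : Fin n → ℝ) (i : Fin n) :
    pd (fun y => y j) x i = (Pi.single i 1 : Fin n → ℝ) j := by
  simp [pd, show (fun y : Fin n → ℝ => y j) = ContinuousLinearMap.proj (R := ℝ) j from rfl]

lemma sum_lt_add_add_sum_gt {M : Type*} [AddCommMonoid M] (g : Fin n → M) (j : Fin n) :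
    (∑ i, if i < j then g i else 0) + g j + (∑ i, if j < i then g i else 0) = ∑ i, g i := by
  have hj : g j = ∑ i, if i = j then g i else 0 := by simp
  rw [hj, ← sum_add_distrib, ← sum_add_distrib]
  refine sum_congr rfl fun i _ => ?_
  rcases lt_trichotomy i j with h | rfl | h
  · simp [h, h.ne, h.not_gt]
  · simp
  · simp [h, h.ne', h.not_gt]

lemma pb_coord (f : (Fin n → ℝ) → ℝ) (x : Fin n → ℝ) (j : Fin n) :
    pb f (fun y => y j) x = x j * ((∑ i, if i < j then x i * pd f x i else 0)
      - ∑ i, if j < i then x i * pd f x i else 0) := by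
  have hterm (a b : Fin n) :
      (if a < b then x a * x b * (pd f x a * pd (fun y => y j) x b
        - pd f x b * pd (fun y => y j) x a) else 0)
      = (if b = j then (if a < j then x j * (x a * pd f x a) else 0) else 0)
        - (if a = j then (if j < b then x j * (x b * pd f x b) else 0) else 0) := by
    simp only [pd_coord]
    obtain rfl | hbj := eq_or_ne b j
    · by_cases hab : a < b
      · simp only [hab, ↓reduceIte, Pi.single_eq_same, mul_one, ne_eq, hab.ne,
          not_false_eq_true, Pi.single_eq_of_ne', mul_zero, sub_zero]
        ring
      · simp [hab]
    · obtain rfl | haj := eq_or_ne a j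
      · by_cases hab : a < b
        · simp only [hab, ↓reduceIte, ne_eq, hbj.symm, not_false_eq_true, Pi.single_eq_of_ne,
            mul_zero, Pi.single_eq_same, mul_one, zero_sub, mul_neg, hbj, neg_inj]
          ring
        · simp [hab]
      · simp [hbj, haj, hbj.symm, haj.symm]
  simp only [pb, hterm]
  simp only [sum_sub_distrib, sum_ite_eq', mem_univ, if_true, ← ite_sum_zero,
    mul_sub, Finset.mul_sum, mul_ite, mul_zero]

lemma mul_pd_prod_zpow (e : Fin n → ℤ) (x : Fin n → ℝ) (hx : ∀ i, x i ≠ 0) (i : Fin n) :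
    x i * pd (fun y => ∏ k, y k ^ e k) x i = e i * ∏ k, x k ^ e k := by
  classical
  have hfactor (k : Fin n) : HasFDerivAt (fun y : Fin n → ℝ => y k ^ e k)
      ((e k * x k ^ (e k - 1)) • ContinuousLinearMap.proj (R := ℝ) k) x :=
    HasDerivAt.comp_hasFDerivAt (f := fun y : Fin n → ℝ => y k) x
      (hasDerivAt_zpow (e k) (x k) (Or.inl (hx k))) (hasFDerivAt_apply k x)
  have hderiv := HasFDerivAt.finsetProd (u := univ) fun k _ => hfactor k
  simp only [pd, hderiv.fderiv, _root_.sum_apply, smul_apply,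
    ContinuousLinearMap.proj_apply, Pi.single_apply, smul_eq_mul, mul_ite, mul_one, mul_zero,
    sum_ite_eq', mem_univ, if_true]
  rw [← mul_prod_erase univ (fun k => x k ^ e k) (mem_univ i), zpow_sub_one₀ (hx i)]
  have := hx i
  field_simp

lemma pb_prod_zpow_coord (e : Fin n → ℤ) (x : Fin n → ℝ) (hx : ∀ i, x i ≠ 0) (j : Fin n) :
    pb (fun y => ∏ k, y k ^ e k) (fun y => y j) x = x j * (∏ k, x k ^ e k) *
      ((2 * (∑ i, if i < j then e i else 0) + e j - ∑ i, e i : ℤ) : ℝ) := by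
  have hsplit := sum_lt_add_add_sum_gt (fun i => (e i : ℝ)) j
  simp only [pb_coord, mul_pd_prod_zpow e x hx, ← ite_zero_mul, ← sum_mul]
  push_cast
  linear_combination (-(x j * ∏ k, x k ^ e k)) * hsplit

end LogCanonical

lemma sum_fin_ite_lt_eq_sum_range {M : Type*} [AddCommMonoid M] {n : ℕ} (g : ℕ → M) (j : Fin n) :
    ∑ i : Fin n, (if i < j then g i else 0) = ∑ t ∈ range j, g t := by
  simp only [Fin.lt_def]
  rw [Fin.sum_univ_eq_sum_range (fun t => if t < (j : ℕ) then g t else 0), ← sum_filter]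
  congr 1
  ext t
  simp only [mem_filter, mem_range]
  omega

def jExponent (m i : ℕ) : ℤ := if i < 2 * m then (-1) ^ i else 0

lemma Jfun_eq_prod_zpow {n : ℕ} (m : ℕ) :
    Jfun m = fun y : Fin n → ℝ => ∏ k, y k ^ jExponent m k := by
  funext y
  rw [Jfun, div_eq_mul_inv, ← prod_inv_distrib, prod_filter, prod_filter, ← prod_mul_distrib]
  refine prod_congr rfl fun k _ => ?_
  rcases Nat.even_or_odd k with hk | hk
  · simp [jExponent, hk, hk.neg_one_pow, Nat.not_odd_iff_even.mpr hk]
  · simp [jExponent, hk, hk.neg_one_pow, Nat.not_even_iff_odd.mpr hk]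

lemma sum_range_jExponent (m k : ℕ) :
    ∑ i ∈ range k, jExponent m i = if k < 2 * m ∧ Odd k then 1 else 0 := by
  induction k with
  | zero => simp
  | succ k ih =>
    rw [sum_range_succ, ih]
    rcases Nat.even_or_odd k with hk | hk <;>
    · simp only [jExponent, hk.neg_one_pow, Nat.odd_iff]
      simp only [Nat.even_iff, Nat.odd_iff] at hk
      split_ifs <;> omega

lemma sum_range_two_mul_jExponent (m N : ℕ) : ∑ i ∈ range (2 * N), jExponent m i = 0 := by
  simp [sum_range_jExponent]

lemma two_mul_sum_range_jExponent_add (m k : ℕ) :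
    2 * ∑ i ∈ range k, jExponent m i + jExponent m k = if k < 2 * m then 1 else 0 := by
  rw [sum_range_jExponent]
  rcases Nat.even_or_odd k with hk | hk <;>
  · simp only [jExponent, hk.neg_one_pow, Nat.odd_iff]
    simp only [Nat.even_iff, Nat.odd_iff] at hk
    split_ifs <;> omega

theorem stmt_4_general (N : ℕ) (m : ℕ)
    (x : Fin (2*N) → ℝ) (hx : ∀ i, 0 < x i) (j : Fin (2*N)) :
    (j.val < 2*m → pb (Jfun m) (fun y => y j) x = Jfun m x * x j) ∧
    (2*m ≤ j.val → pb (Jfun m) (fun y => y j) x = 0) := by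
  have hbracket : pb (Jfun m) (fun y => y j) x
      = x j * Jfun m x * ((if (j : ℕ) < 2 * m then 1 else 0 : ℤ) : ℝ) := by
    simp only [Jfun_eq_prod_zpow, pb_prod_zpow_coord _ x (fun i => (hx i).ne'),
      sum_fin_ite_lt_eq_sum_range (jExponent m), Fin.sum_univ_eq_sum_range (jExponent m),
      sum_range_two_mul_jExponent, sub_zero, two_mul_sum_range_jExponent_add]
  refine ⟨fun hj => ?_, fun hj => ?_⟩
  · rw [hbracket, if_pos hj]
    push_cast
    ring
  · rw [hbracket, if_neg hj.not_gt]
    push_cast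
    ring

/-- For even `n = 2N` and `1 ≤ m ≤ N`: `{J_m, x_j} = J_m x_j` for (1-based) `j ≤ 2m`
(0-based `j.val < 2m`) and `{J_m, x_j} = 0` for `j > 2m`. -/
theorem stmt_4 (N : ℕ) (m : ℕ) (hm1 : 1 ≤ m) (hm2 : m ≤ N)
    (x : Fin (2*N) → ℝ) (hx : ∀ i, 0 < x i) (j : Fin (2*N)) :
    (j.val < 2*m → pb (Jfun m) (fun y => y j) x = Jfun m x * x j) ∧
    (2*m ≤ j.val → pb (Jfun m) (fun y => y j) x = 0) :=
  stmt_4_general N m x hx j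
end

section
/- Let n be even, a, k ∈ ℝ^n, and 1 ≤ m ≤ n/2 − 1. Then for every x in the positive orthant (0,∞)^n, {F_m, H}(x) = I_m(x) Σ_{j=1}^{2m} k_j (v_j(x) + v_{j−1}(x) − v_{2m}(x)), where the bracket is the log-canonical Poisson bracket. -/
/-!
Write `b_i = a_i x_i`. The log-gradients are `x_i ∂_i F_m = I_m (b_i [i < 2m] + v_{2m} ε_i)`, where
`ε` is the exponent vector of `I_m`, and `x_j ∂_j H = b_j + k_j`; the bracket is the
antisymmetric form `ω(P, Q) = Σ_{i<j} (P_i Q_j - P_j Q_i)` of the two log-gradients. Since `ε`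
vanishes below `2m` and then alternates `-1, +1` in pairs, `ω(ε, Q) = -Σ_{j ≥ 2m} Q_j`, which
cancels the cross term of `b [· < 2m]` with the tail. What is left is
`I_m ω_{<2m}(b, b + k) = I_m ω_{<2m}(b, k)`, and an Abel summation turns this into the stated sum.
-/

open Finset

/-- `tailSign (2 * m) i` is the exponent of `x i` in `Ifun m x`. -/
def tailSign (r i : ℕ) : ℝ :=
  (if r ≤ i ∧ Odd i then 1 else 0) - (if r ≤ i ∧ Even i then 1 else 0)

def wedge (n : ℕ) (P Q : ℕ → ℝ) : ℝ :=
  ∑ j ∈ range n, ∑ i ∈ range j, (P i * Q j - P j * Q i)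

lemma wedge_succ (n : ℕ) (P Q : ℕ → ℝ) :
    wedge (n + 1) P Q = wedge n P Q + (∑ i ∈ range n, P i) * Q n - P n * ∑ i ∈ range n, Q i := by
  rw [wedge, sum_range_succ, ← wedge, sum_sub_distrib, sum_mul, mul_sum, add_sub_assoc]

lemma wedge_self (n : ℕ) (P : ℕ → ℝ) : wedge n P P = 0 :=
  sum_eq_zero fun j _ => sum_eq_zero fun i _ => by ring

lemma wedge_add_left (n : ℕ) (P P' Q : ℕ → ℝ) :
    wedge n (P + P') Q = wedge n P Q + wedge n P' Q := by
  simp only [wedge, ← sum_add_distrib, Pi.add_apply]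
  exact sum_congr rfl fun j _ => sum_congr rfl fun i _ => by ring

lemma wedge_add_right (n : ℕ) (P Q Q' : ℕ → ℝ) :
    wedge n P (Q + Q') = wedge n P Q + wedge n P Q' := by
  simp only [wedge, ← sum_add_distrib, Pi.add_apply]
  exact sum_congr rfl fun j _ => sum_congr rfl fun i _ => by ring

lemma wedge_smul_left (n : ℕ) (c : ℝ) (P Q : ℕ → ℝ) :
    wedge n (c • P) Q = c * wedge n P Q := by
  simp only [wedge, mul_sum, Pi.smul_apply, smul_eq_mul]
  exact sum_congr rfl fun j _ => sum_congr rfl fun i _ => by ring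

lemma wedge_congr_left {n : ℕ} {P P' : ℕ → ℝ} (h : ∀ i < n, P i = P' i) (Q : ℕ → ℝ) :
    wedge n P Q = wedge n P' Q :=
  sum_congr rfl fun j hj => sum_congr rfl fun i hi => by
    rw [h i (by grind), h j (mem_range.mp hj)]

lemma wedge_of_forall_le_eq_zero {r n : ℕ} (hrn : r ≤ n) {P : ℕ → ℝ} (hP : ∀ i, r ≤ i → P i = 0)
    (Q : ℕ → ℝ) :
    wedge n P Q = wedge r P Q + (∑ i ∈ range r, P i) * ∑ j ∈ range n, if r ≤ j then Q j else 0 := by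
  induction n, hrn using Nat.le_induction with
  | base => simp [sum_ite_of_false fun j hj => (mem_range.mp hj).not_ge]
  | succ n hrn ih =>
    have hsum : ∑ i ∈ range n, P i = ∑ i ∈ range r, P i :=
      (sum_subset (range_subset_range.mpr hrn) fun i _ hi => hP i (by simpa using hi)).symm
    rw [wedge_succ, ih, hsum, hP n hrn, sum_range_succ, if_pos hrn]
    ring

lemma sum_range_two_mul_tailSign (m p : ℕ) : ∑ i ∈ range (2 * p), tailSign (2 * m) i = 0 := by
  induction p with
  | zero => simp
  | succ p ih =>
    rw [mul_add, mul_one, sum_range_succ, sum_range_succ, ih]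
    by_cases h : 2 * m ≤ 2 * p
    · simp [tailSign, h, h.trans (Nat.le_succ _)]
    · simp [tailSign, h, show ¬ 2 * m ≤ 2 * p + 1 by omega]

lemma wedge_tailSign_left (m p : ℕ) (Q : ℕ → ℝ) :
    wedge (2 * p) (tailSign (2 * m)) Q = -∑ j ∈ range (2 * p), if 2 * m ≤ j then Q j else 0 := by
  induction p with
  | zero => simp [wedge]
  | succ p ih =>
    rw [mul_add, mul_one, wedge_succ, wedge_succ, ih, sum_range_succ, sum_range_succ,
      sum_range_succ, sum_range_succ, sum_range_two_mul_tailSign]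
    by_cases h : 2 * m ≤ 2 * p
    · simp [tailSign, h, h.trans (Nat.le_succ _), Nat.not_odd_iff_even.mpr (even_two_mul p)]
      ring
    · simp [tailSign, h, show ¬ 2 * m ≤ 2 * p + 1 by omega]

lemma wedge_eq_sum_mul_partialSums (r : ℕ) (b κ : ℕ → ℝ) :
    wedge r b κ = ∑ j ∈ range r,
      κ j * (∑ i ∈ range (j + 1), b i + ∑ i ∈ range j, b i - ∑ i ∈ range r, b i) := by
  induction r with
  | zero => simp [wedge]
  | succ r ih =>
    have hshift : ∀ j ∈ range r, κ j * (∑ i ∈ range (j + 1), b i + ∑ i ∈ range j, b i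
        - ∑ i ∈ range (r + 1), b i) = κ j * (∑ i ∈ range (j + 1), b i + ∑ i ∈ range j, b i
        - ∑ i ∈ range r, b i) - κ j * b r := fun j _ => by rw [sum_range_succ _ r]; ring
    rw [wedge_succ, ih, sum_range_succ _ r, sum_congr rfl hshift, sum_sub_distrib, ← sum_mul]
    ring

lemma wedge_indicator_add_tailSign (b κ : ℕ → ℝ) {m N : ℕ} (h : m ≤ N) :
    wedge (2 * N) ((Set.Iio (2 * m)).indicator b + (∑ i ∈ range (2 * m), b i) • tailSign (2 * m))
      (b + κ)
      = ∑ j ∈ range (2 * m),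
          κ j * (∑ i ∈ range (j + 1), b i + ∑ i ∈ range j, b i - ∑ i ∈ range (2 * m), b i) := by
  have hβ : ∀ i < 2 * m, (Set.Iio (2 * m)).indicator b i = b i :=
    fun i hi => Set.indicator_of_mem (Set.mem_Iio.mpr hi) b
  rw [wedge_add_left, wedge_smul_left, wedge_tailSign_left,
    wedge_of_forall_le_eq_zero (show 2 * m ≤ 2 * N by omega)
      (fun i hi => Set.indicator_of_notMem (by simpa using hi) b),
    wedge_congr_left hβ, sum_congr rfl fun i hi => hβ i (mem_range.mp hi), wedge_add_right,
    wedge_self, zero_add, wedge_eq_sum_mul_partialSums]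
  ring

lemma sum_range_ite_lt {r n : ℕ} (h : r ≤ n) (g : ℕ → ℝ) :
    ∑ i ∈ range n, (if i < r then g i else 0) = ∑ i ∈ range r, g i := by
  rw [← sum_filter]
  congr 1
  ext i
  simp only [mem_filter, mem_range]
  omega

lemma sum_filter_val_lt {r n : ℕ} (h : r ≤ n) (g : ℕ → ℝ) :
    ∑ j ∈ univ.filter (fun j : Fin n => j.val < r), g j = ∑ i ∈ range r, g i := by
  rw [sum_filter, Fin.sum_univ_eq_sum_range (fun j => if j < r then g j else 0), sum_range_ite_lt h]

lemma pb_eq_wedge {n : ℕ} {f g : (Fin n → ℝ) → ℝ} {x : Fin n → ℝ} {P Q : ℕ → ℝ}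
    (hP : ∀ i : Fin n, x i * pd f x i = P i) (hQ : ∀ i : Fin n, x i * pd g x i = Q i) :
    pb f g x = wedge n P Q := by
  have hterm : ∀ i j : Fin n, x i * x j * (pd f x i * pd g x j - pd f x j * pd g x i)
      = P i * Q j - P j * Q i := fun i j => by
    rw [← hP, ← hQ, ← hP, ← hQ]
    ring
  simp only [pb, hterm, Fin.lt_def]
  rw [sum_comm, wedge,
    ← Fin.sum_univ_eq_sum_range (fun j => ∑ i ∈ range j, (P i * Q j - P j * Q i))]
  refine sum_congr rfl fun j _ => ?_
  rw [Fin.sum_univ_eq_sum_range (fun i => if i < j.val then P i * Q j - P j * Q i else 0),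
    sum_range_ite_lt j.isLt.le]

lemma pd_mul {n : ℕ} {f g : (Fin n → ℝ) → ℝ} {x : Fin n → ℝ}
    (hf : DifferentiableAt ℝ f x) (hg : DifferentiableAt ℝ g x) (i : Fin n) :
    pd (fun y => f y * g y) x i = f x * pd g x i + g x * pd f x i := by
  simp [pd, fderiv_fun_mul hf hg]

lemma pd_inv {n : ℕ} {g : (Fin n → ℝ) → ℝ} {x : Fin n → ℝ}
    (hg : DifferentiableAt ℝ g x) (h0 : g x ≠ 0) (i : Fin n) :
    pd (fun y => (g y)⁻¹) x i = -pd g x i / g x ^ 2 := by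
  have h := (hasDerivAt_inv h0).comp_hasFDerivAt x hg.hasFDerivAt
  rw [Function.comp_def] at h
  simp [pd, h.fderiv, div_eq_mul_inv, mul_comm]

lemma mul_pd_prod {n : ℕ} (S : Finset (Fin n)) (x : Fin n → ℝ) (i : Fin n) :
    x i * pd (fun y => ∏ j ∈ S, y j) x i = if i ∈ S then ∏ j ∈ S, x j else 0 := by
  rw [pd, hasFDerivAt_finsetProd.fderiv]
  simp only [FunLike.coe_sum, Finset.sum_apply, FunLike.coe_smul,
    Pi.smul_apply, ContinuousLinearMap.proj_apply, Pi.single_apply, smul_eq_mul, mul_ite,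
    mul_one, mul_zero, sum_ite_eq']
  split_ifs with h
  · exact mul_prod_erase S x h
  · rfl

lemma hasFDerivAt_sum_comp_apply {n : ℕ} (S : Finset (Fin n)) {φ : Fin n → ℝ → ℝ}
    {x : Fin n → ℝ} (hφ : ∀ j ∈ S, DifferentiableAt ℝ (φ j) (x j)) :
    HasFDerivAt (fun y => ∑ j ∈ S, φ j (y j))
      (∑ j ∈ S, deriv (φ j) (x j) •
        ContinuousLinearMap.proj (R := ℝ) (φ := fun _ : Fin n => ℝ) j) x :=
  HasFDerivAt.fun_sum fun j hj =>
    (hφ j hj).hasDerivAt.comp_hasFDerivAt x (hasFDerivAt_apply j x)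

lemma pd_sum_comp_apply {n : ℕ} (S : Finset (Fin n)) {φ : Fin n → ℝ → ℝ}
    {x : Fin n → ℝ} (hφ : ∀ j ∈ S, DifferentiableAt ℝ (φ j) (x j)) (i : Fin n) :
    pd (fun y => ∑ j ∈ S, φ j (y j)) x i = if i ∈ S then deriv (φ i) (x i) else 0 := by
  simp [pd, (hasFDerivAt_sum_comp_apply S hφ).fderiv, Pi.single_apply]

lemma mul_pd_vfun {n : ℕ} (a : Fin n → ℝ) (r : ℕ) (x : Fin n → ℝ) (i : Fin n) :
    x i * pd (vfun a r) x i = if i.val < r then a i * x i else 0 := by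
  show x i * pd (fun y => ∑ j ∈ _, a j * y j) x i = _
  rw [pd_sum_comp_apply (φ := fun j t => a j * t) _ (fun j _ => by fun_prop)]
  simp [mul_comm]

lemma mul_pd_Hfun {n : ℕ} (a k : Fin n → ℝ) {x : Fin n → ℝ} (hx : ∀ i, x i ≠ 0) (i : Fin n) :
    x i * pd (Hfun a k) x i = a i * x i + k i := by
  show x i * pd (fun y => ∑ j, (a j * y j + k j * Real.log (y j))) x i = _
  rw [pd_sum_comp_apply (φ := fun j t => a j * t + k j * Real.log t) _
    (fun j _ => by fun_prop (disch := exact hx j))]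
  have hderiv : HasDerivAt (fun t => a i * t + k i * Real.log t) (a i * 1 + k i * (x i)⁻¹) (x i) :=
    ((hasDerivAt_id' (x i)).const_mul (a i)).add ((Real.hasDerivAt_log (hx i)).const_mul (k i))
  rw [if_pos (mem_univ i), hderiv.deriv]
  field_simp [hx i]

lemma differentiableAt_vfun {n : ℕ} (a : Fin n → ℝ) (r : ℕ) (x : Fin n → ℝ) :
    DifferentiableAt ℝ (vfun a r) x :=
  (hasFDerivAt_sum_comp_apply (φ := fun j t => a j * t) _ fun j _ => by fun_prop).differentiableAt

lemma differentiableAt_Ifun {n : ℕ} (m : ℕ) {x : Fin n → ℝ} (hx : ∀ i, x i ≠ 0) :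
    DifferentiableAt ℝ (Ifun m) x := by
  unfold Ifun
  simp only [div_eq_mul_inv]
  fun_prop (disch := exact prod_ne_zero_iff.mpr fun j _ => hx j)

lemma mul_pd_Ifun {n : ℕ} (m : ℕ) {x : Fin n → ℝ} (hx : ∀ i, x i ≠ 0) (i : Fin n) :
    x i * pd (Ifun m) x i = Ifun m x * tailSign (2 * m) i := by
  set S := univ.filter (fun j : Fin n => 2 * m ≤ j.val ∧ Odd j.val) with hS
  set T := univ.filter (fun j : Fin n => 2 * m ≤ j.val ∧ Even j.val) with hT
  have hT0 : ∏ j ∈ T, x j ≠ 0 := prod_ne_zero_iff.mpr fun j _ => hx j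
  have hI : Ifun m = fun y => (∏ j ∈ S, y j) * (∏ j ∈ T, y j)⁻¹ :=
    funext fun y => div_eq_mul_inv _ _
  rw [hI, pd_mul (by fun_prop) (by fun_prop (disch := exact hT0)), pd_inv (by fun_prop) hT0]
  calc _ = (x i * pd (fun y => ∏ j ∈ S, y j) x i) / ∏ j ∈ T, x j
        - (∏ j ∈ S, x j) * (x i * pd (fun y => ∏ j ∈ T, y j) x i) / (∏ j ∈ T, x j) ^ 2 := by
        ring
    _ = _ := by
      rw [mul_pd_prod, mul_pd_prod, tailSign]
      simp only [hS, hT, mem_filter, mem_univ, true_and] at hT0 ⊢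
      split_ifs <;> field_simp <;> ring

lemma mul_pd_Ffun {n : ℕ} (a : Fin n → ℝ) (m : ℕ) {x : Fin n → ℝ} (hx : ∀ i, x i ≠ 0)
    (i : Fin n) :
    x i * pd (Ffun a m) x i
      = Ifun m x *
        ((if i.val < 2 * m then a i * x i else 0) + vfun a (2 * m) x * tailSign (2 * m) i) := by
  have hF : Ffun a m = fun y => vfun a (2 * m) y * Ifun m y := rfl
  rw [hF, pd_mul (differentiableAt_vfun a _ x) (differentiableAt_Ifun m hx), mul_add,
    ← mul_assoc, mul_comm (x i), mul_assoc, mul_pd_Ifun m hx, mul_left_comm (x i),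
    mul_pd_vfun]
  ring

theorem stmt_7_general (N : ℕ) (a k : Fin (2*N) → ℝ) (m : ℕ) (hm2 : m + 1 ≤ N)
    (x : Fin (2*N) → ℝ) (hx : ∀ i, 0 < x i) :
    pb (Ffun a m) (Hfun a k) x
      = Ifun m x * ∑ j ∈ Finset.univ.filter (fun j : Fin (2*N) => j.val < 2*m),
          k j * (vfun a (j.val+1) x + vfun a j.val x - vfun a (2*m) x) := by
  have hx0 : ∀ i, x i ≠ 0 := fun i => (hx i).ne'
  set b : ℕ → ℝ := Function.extend Fin.val (fun i => a i * x i) 0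
  set κ : ℕ → ℝ := Function.extend Fin.val k 0
  have hb : ∀ i : Fin (2 * N), b i = a i * x i := Fin.val_injective.extend_apply _ _
  have hκ : ∀ i : Fin (2 * N), κ i = k i := Fin.val_injective.extend_apply _ _
  have hv : ∀ r ≤ 2 * N, vfun a r x = ∑ i ∈ range r, b i := fun r hr => by
    simp only [vfun, ← hb]
    exact sum_filter_val_lt hr b
  have hF : ∀ i : Fin (2 * N), x i * pd (Ffun a m) x i = (Ifun m x •
      ((Set.Iio (2 * m)).indicator b + (∑ i ∈ range (2 * m), b i) • tailSign (2 * m))) i :=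
    fun i => by
    rw [mul_pd_Ffun a m hx0, hv _ (by omega), ← hb]
    simp [Set.indicator_apply]
  have hH : ∀ i : Fin (2 * N), x i * pd (Hfun a k) x i = (b + κ) i := fun i => by
    rw [mul_pd_Hfun a k hx0, ← hb, ← hκ, Pi.add_apply]
  rw [pb_eq_wedge hF hH, wedge_smul_left, wedge_indicator_add_tailSign b κ (by omega),
    ← sum_filter_val_lt (by omega : 2 * m ≤ 2 * N)]
  congr 1
  refine sum_congr rfl fun j hj => ?_
  have hj : j.val < 2 * m := (mem_filter.mp hj).2
  rw [hκ, hv _ (by omega), hv _ (by omega), hv _ (by omega)]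

/-- Lemma 4.1 of the paper: for even `n = 2N` and `1 ≤ m ≤ N − 1`,
`{F_m, H} = I_m Σ_{j=1}^{2m} k_j (v_j + v_{j−1} − v_{2m})`. -/
theorem stmt_7 (N : ℕ) (a k : Fin (2*N) → ℝ) (m : ℕ) (hm1 : 1 ≤ m) (hm2 : m + 1 ≤ N)
    (x : Fin (2*N) → ℝ) (hx : ∀ i, 0 < x i) :
    pb (Ffun a m) (Hfun a k) x
      = Ifun m x * ∑ j ∈ Finset.univ.filter (fun j : Fin (2*N) => j.val < 2*m),
          k j * (vfun a (j.val+1) x + vfun a j.val x - vfun a (2*m) x) :=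
  stmt_7_general N a k m hm2 x hx
end

section
/- Let n be even and let a, k ∈ ℝ^n with a ≠ 0; let ℓ denote the smallest integer such that a_{ℓ+1} ≠ 0 and let λ = ⌊ℓ/2⌋. Then the n/2 functions J_1, J_2, ..., J_λ, F_{λ+1}, F_{λ+2}, ..., F_{n/2−1}, H are functionally independent on the positive orthant: there exists a point of (0,∞)^n at which their gradients are linearly independent. -/
/-
Put `x_ℓ = 1/s` and all other coordinates equal to `1`. Then the gradients of the `J_m` are
fixed alternating `±1` vectors supported on `[0, 2m)`, the gradient of `H` is `a + k/x`, and
`s ∇F_m` tends, as `s → 0`, to `a_ℓ` times an alternating vector supported on `[2m, n)`; indeed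
each rescaled gradient is affine in `s`. At `s = 0` the family is triangular with respect to
suitable pivot coordinates (for `H` the coordinate `ℓ`, which lies in the gap `[2λ, 2λ + 2)`
between the two kinds of supports), so it is linearly independent, and linear independence
survives for small `s > 0` because it is an open condition.
-/

open Finset Filter Topology ContinuousLinearMap

theorem linearIndependent_of_triangular {ι κ K α : Type*} [Fintype ι] [Field K] [LinearOrder α]
    (v : ι → κ → K) (π : ι → κ) (b : ι → α) (hb : Function.Injective b)
    (hdiag : ∀ i, v i (π i) ≠ 0) (htri : ∀ i j, b i < b j → v i (π j) = 0) :
    LinearIndependent K v := by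
  classical
  rw [Fintype.linearIndependent_iff]
  intro c hc
  by_contra! hne
  obtain ⟨j, hj, hmax⟩ := (univ.filter fun i => c i ≠ 0).exists_max_image b
    (by simpa [filter_nonempty_iff] using hne)
  have hsum := congrFun hc (π j)
  simp only [Finset.sum_apply, Pi.smul_apply, smul_eq_mul, Pi.zero_apply] at hsum
  rw [sum_eq_single j] at hsum
  · exact mul_ne_zero (mem_filter.1 hj).2 (hdiag j) hsum
  · intro i _ hij
    by_cases hci : c i = 0
    · rw [hci, zero_mul]
    · rw [htri i j ((hmax i (by simp [hci])).lt_of_ne (hb.ne hij)), mul_zero]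
  · simp

theorem LinearIndependent.exists_pos_add_smul {ι E : Type*} [Finite ι] [NormedAddCommGroup E]
    [NormedSpace ℝ E] {v : ι → E} (hv : LinearIndependent ℝ v) (C : ι → E) :
    ∃ s : ℝ, 0 < s ∧ LinearIndependent ℝ (v + s • C) := by
  cases nonempty_fintype ι
  have hlim : Tendsto (fun s : ℝ => v + s • C) (𝓝[>] 0) (𝓝 v) := by
    have hcont : Continuous (fun s : ℝ => v + s • C) := by fun_prop
    simpa using (hcont.tendsto 0).mono_left nhdsWithin_le_nhds
  obtain ⟨s, hs, hli⟩ := ((hlim.eventually hv.eventually).and self_mem_nhdsWithin).exists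
  exact ⟨s, hli, hs⟩

theorem sum_proj_apply_single {ι : Type*} [DecidableEq ι] (S : Finset ι) (j : ι) :
    (∑ i ∈ S, (proj i : (ι → ℝ) →L[ℝ] ℝ)) (Pi.single j 1) = if j ∈ S then 1 else 0 := by
  simp [Pi.single_apply]

theorem sum_smul_proj_apply_single {ι : Type*} [DecidableEq ι] (S : Finset ι) (c : ι → ℝ)
    (j : ι) :
    (∑ i ∈ S, c i • (proj i : (ι → ℝ) →L[ℝ] ℝ)) (Pi.single j 1) = if j ∈ S then c j else 0 := by
  simp [Pi.single_apply]

section Gradients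

variable {ι : Type*} [Fintype ι] [DecidableEq ι]

theorem hasFDerivAt_prod_of_eq_one {S : Finset ι} {x : ι → ℝ} (hS : ∀ i ∈ S, x i = 1) :
    HasFDerivAt (fun y : ι → ℝ => ∏ i ∈ S, y i) (∑ i ∈ S, (proj i : (ι → ℝ) →L[ℝ] ℝ)) x := by
  refine (HasFDerivAt.finsetProd (u := S) (g := fun i (y : ι → ℝ) => y i)
    fun i _ => hasFDerivAt_apply i x).congr_fderiv (sum_congr rfl fun i _ => ?_)
  rw [prod_eq_one fun j hj => hS j (mem_of_mem_erase hj), one_smul]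

theorem hasFDerivAt_prod_div_prod_of_eq_one {P Q : Finset ι} {x : ι → ℝ}
    (hP : ∀ i ∈ P, x i = 1) (hQ : ∀ i ∈ Q, x i = 1) :
    HasFDerivAt (fun y : ι → ℝ => (∏ i ∈ P, y i) / ∏ i ∈ Q, y i)
      (∑ i ∈ P, (proj i : (ι → ℝ) →L[ℝ] ℝ) - ∑ i ∈ Q, (proj i : (ι → ℝ) →L[ℝ] ℝ)) x := by
  have hQx : ∏ i ∈ Q, x i = 1 := prod_eq_one hQ
  have hinv := (hasDerivAt_inv (hQx ▸ one_ne_zero)).comp_hasFDerivAt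
    (f := fun y : ι → ℝ => ∏ i ∈ Q, y i) x (hasFDerivAt_prod_of_eq_one hQ)
  simp only [div_eq_mul_inv]
  refine ((hasFDerivAt_prod_of_eq_one hP).mul hinv).congr_fderiv ?_
  simp [prod_eq_one hP, hQx, sub_eq_add_neg, add_comm]

end Gradients

theorem ite_even_sub_ite_odd (c : Prop) [Decidable c] (j : ℕ) :
    ((if c ∧ Even j then 1 else 0) - if c ∧ Odd j then 1 else 0 : ℝ) =
      if c then (-1) ^ j else 0 := by
  rcases Nat.even_or_odd j with h | h <;> by_cases hc : c <;>
    simp [hc, h, Nat.not_odd_iff_even.2, Nat.not_even_iff_odd.2, h.neg_one_pow]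

section Coordinates

variable {n : ℕ}

def alternatingHead (m : ℕ) (j : Fin n) : ℝ := if j.val < 2 * m then (-1) ^ j.val else 0

def alternatingTail (m : ℕ) (j : Fin n) : ℝ := if 2 * m ≤ j.val then -(-1) ^ j.val else 0

theorem pd_eq_of_hasFDerivAt {f : (Fin n → ℝ) → ℝ} {f' : (Fin n → ℝ) →L[ℝ] ℝ} {x : Fin n → ℝ}
    (h : HasFDerivAt f f' x) (i : Fin n) : pd f x i = f' (Pi.single i 1) := by
  rw [pd, h.fderiv]

theorem pd_Jfun_of_eq_one {m : ℕ} {x : Fin n → ℝ} (hx : ∀ i : Fin n, i.val < 2 * m → x i = 1) :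
    pd (Jfun m) x = alternatingHead m := by
  have hJ : HasFDerivAt (Jfun (n := n) m) _ x := hasFDerivAt_prod_div_prod_of_eq_one
    (fun i hi => hx i (mem_filter.1 hi).2.1) (fun i hi => hx i (mem_filter.1 hi).2.1)
  funext j
  rw [pd_eq_of_hasFDerivAt hJ]
  simp only [sub_apply, sum_proj_apply_single, mem_filter, mem_univ, true_and]
  exact ite_even_sub_ite_odd _ _

theorem hasFDerivAt_vfun (a : Fin n → ℝ) (M : ℕ) (x : Fin n → ℝ) :
    HasFDerivAt (vfun a M)
      (∑ i ∈ univ.filter (fun i : Fin n => i.val < M), a i • (proj i : (Fin n → ℝ) →L[ℝ] ℝ)) x :=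
  HasFDerivAt.fun_sum fun i _ => (hasFDerivAt_apply i x).const_mul (a i)

theorem pd_Ffun_of_eq_one (a : Fin n → ℝ) {m : ℕ} {x : Fin n → ℝ}
    (hx : ∀ i : Fin n, 2 * m ≤ i.val → x i = 1) :
    pd (Ffun a m) x =
      (fun j => if j.val < 2 * m then a j else 0) + vfun a (2 * m) x • alternatingTail m := by
  have hI : HasFDerivAt (Ifun (n := n) m) _ x := hasFDerivAt_prod_div_prod_of_eq_one
    (fun i hi => hx i (mem_filter.1 hi).2.1) (fun i hi => hx i (mem_filter.1 hi).2.1)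
  have hI1 : Ifun m x = 1 := by
    rw [Ifun, prod_eq_one (fun i hi => hx i (mem_filter.1 hi).2.1),
      prod_eq_one (fun i hi => hx i (mem_filter.1 hi).2.1), div_one]
  have hF : HasFDerivAt (Ffun a m) _ x := (hasFDerivAt_vfun a (2 * m) x).mul hI
  funext j
  rw [pd_eq_of_hasFDerivAt hF]
  simp only [add_apply, smul_apply, sub_apply, sum_smul_proj_apply_single,
    sum_proj_apply_single, hI1, mem_filter, mem_univ, true_and, smul_eq_mul, one_mul,
    Pi.add_apply, Pi.smul_apply, alternatingTail]
  rw [← neg_sub, ite_even_sub_ite_odd]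
  split_ifs <;> ring

theorem pd_Hfun (a k : Fin n → ℝ) {x : Fin n → ℝ} (hx : ∀ i, x i ≠ 0) :
    pd (Hfun a k) x = a + k / x := by
  have hterm : ∀ i : Fin n, HasFDerivAt (fun y : Fin n → ℝ => a i * y i + k i * Real.log (y i))
      ((a i + k i / x i) • (proj i : (Fin n → ℝ) →L[ℝ] ℝ)) x := by
    intro i
    refine (((hasFDerivAt_apply i x).const_mul (a i)).add
      (((hasFDerivAt_apply i x).log (hx i)).const_mul (k i))).congr_fderiv ?_
    rw [add_smul, smul_smul, div_eq_mul_inv]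
  have hH : HasFDerivAt (Hfun a k) _ x := HasFDerivAt.fun_sum (u := univ) fun i _ => hterm i
  funext j
  rw [pd_eq_of_hasFDerivAt hH]
  simp [Pi.single_apply]

end Coordinates

section Spike

variable {n : ℕ} (a k : Fin n → ℝ) (ℓ : Fin n)

open Function

theorem vfun_update_one {M : ℕ} (hℓ : ℓ.val < M) (t : ℝ) :
    vfun a M (update 1 ℓ t) = vfun a M 1 + (t - 1) * a ℓ := by
  rw [← sub_eq_iff_eq_add', vfun, vfun, ← sum_sub_distrib, sum_eq_single ℓ]
  · simp only [update_self, Pi.one_apply]; ring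
  · intro j _ hj; simp [update_of_ne hj]
  · simp [hℓ]

theorem smul_pd_Ffun_update_one {m : ℕ} (hℓ : ℓ.val < 2 * m) {s : ℝ} (hs : s ≠ 0) :
    s • pd (Ffun a m) (update 1 ℓ s⁻¹) = a ℓ • alternatingTail m +
      s • ((fun j => if j.val < 2 * m then a j else 0) +
        (vfun a (2 * m) 1 - a ℓ) • alternatingTail m) := by
  rw [pd_Ffun_of_eq_one a fun i hi => update_of_ne (Fin.ne_of_val_ne (by omega)) _ _,
    vfun_update_one a ℓ hℓ]
  funext j
  simp only [Pi.add_apply, Pi.smul_apply, smul_eq_mul]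
  field_simp
  ring

theorem pd_Hfun_update_one {s : ℝ} (hs : s ≠ 0) :
    pd (Hfun a k) (update 1 ℓ s⁻¹) = a + update k ℓ 0 + s • Pi.single ℓ (k ℓ) := by
  have hx : ∀ i, update (1 : Fin n → ℝ) ℓ s⁻¹ i ≠ 0 := by
    intro i; by_cases hi : i = ℓ <;> simp [hi, hs]
  rw [pd_Hfun a k hx]
  funext j
  by_cases hj : j = ℓ
  · subst hj; simp [mul_comm]
  · simp [hj]

end Spike

section Family

variable {N : ℕ} (a k : Fin (2 * N) → ℝ)

noncomputable def integralFamily (ℓ : ℕ) (p : Fin N) : (Fin (2 * N) → ℝ) → ℝ :=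
  if p.val < ℓ / 2 then Jfun (p.val + 1)
  else if p.val < N - 1 then Ffun a (p.val + 1)
  else Hfun a k

def limitGradient (ℓ : Fin (2 * N)) (p : Fin N) : Fin (2 * N) → ℝ :=
  if p.val < ℓ.val / 2 then alternatingHead (p.val + 1)
  else if p.val < N - 1 then a ℓ • alternatingTail (p.val + 1)
  else a + Function.update k ℓ 0

theorem linearIndependent_limitGradient {ℓ : Fin (2 * N)} (hℓ : a ℓ ≠ 0) :
    LinearIndependent ℝ (limitGradient a k ℓ) := by
  let π : Fin N → Fin (2 * N) := fun q =>
    ⟨if q.val < ℓ.val / 2 then 2 * q.val + 1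
      else if q.val < N - 1 then 2 * q.val + 2 else ℓ.val, by
      have := q.isLt; have := ℓ.isLt; split_ifs <;> omega⟩
  -- The supports of the `J`-rows grow with the index and those of the `F`-rows shrink,
  -- so the two blocks are ordered oppositely; the dense `H`-row comes last.
  let b : Fin N → ℤ := fun q =>
    if q.val < ℓ.val / 2 then q.val else if q.val < N - 1 then -q.val else N
  refine linearIndependent_of_triangular _ π b ?_ ?_ ?_
  · intro p q hpq
    have := p.isLt; have := q.isLt
    simp only [b] at hpq
    ext; split_ifs at hpq <;> omega
  · intro p
    have := p.isLt; have := ℓ.isLt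
    simp only [limitGradient]
    split_ifs <;> simp [alternatingHead, alternatingTail, π, *, pow_succ, pow_mul] <;> omega
  · intro p q hpq
    have := p.isLt; have := q.isLt; have := ℓ.isLt
    simp only [b] at hpq
    split_ifs at hpq <;> simp [limitGradient, alternatingHead, alternatingTail, π, *] <;> omega

def rowScale (ℓ : ℕ) (s : ℝˣ) (p : Fin N) : ℝˣ :=
  if p.val < ℓ / 2 then 1 else if p.val < N - 1 then s else 1

theorem exists_rowScale_smul_pd_eq (ℓ : Fin (2 * N)) :
    ∃ C : Fin N → Fin (2 * N) → ℝ, ∀ s : ℝˣ,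
      rowScale (N := N) ℓ.val s •
          (fun p => pd (integralFamily a k ℓ.val p) (Function.update 1 ℓ (s : ℝ)⁻¹)) =
        limitGradient a k ℓ + (s : ℝ) • C := by
  refine ⟨fun p => if p.val < ℓ.val / 2 then 0
    else if p.val < N - 1 then (fun j => if j.val < 2 * (p.val + 1) then a j else 0) +
      (vfun a (2 * (p.val + 1)) 1 - a ℓ) • alternatingTail (p.val + 1)
    else Pi.single ℓ (k ℓ), fun s => funext fun p => ?_⟩
  simp only [Pi.smul_apply', Pi.add_apply, Pi.smul_apply, rowScale, integralFamily, limitGradient]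
  split_ifs with hJ hF
  · rw [one_smul, smul_zero, add_zero,
      pd_Jfun_of_eq_one fun i hi => Function.update_of_ne (Fin.ne_of_val_ne (by omega)) _ _]
  · rw [Units.smul_def]
    exact smul_pd_Ffun_update_one a ℓ (by omega) s.ne_zero
  · rw [one_smul]
    exact pd_Hfun_update_one a k ℓ s.ne_zero

end Family

theorem stmt_11_general (N : ℕ) (a k : Fin (2*N) → ℝ)
    (ℓ : ℕ) (hℓ : ℓ < 2*N) (hℓ1 : a ⟨ℓ, hℓ⟩ ≠ 0)
    (G : Fin N → (Fin (2*N) → ℝ) → ℝ)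
    (hG : ∀ p : Fin N, G p =
      if p.val < ℓ/2 then Jfun (p.val+1)
      else if p.val < N - 1 then Ffun a (p.val+1)
      else Hfun a k) :
    ∃ x : Fin (2*N) → ℝ, (∀ i, 0 < x i) ∧
      LinearIndependent ℝ (fun p : Fin N => fun i : Fin (2*N) => pd (G p) x i) := by
  obtain rfl : G = integralFamily a k ℓ := funext hG
  obtain ⟨C, hC⟩ := exists_rowScale_smul_pd_eq a k ⟨ℓ, hℓ⟩
  obtain ⟨s, hs, hli⟩ := (linearIndependent_limitGradient a k hℓ1).exists_pos_add_smul C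
  refine ⟨Function.update 1 ⟨ℓ, hℓ⟩ s⁻¹, fun i => ?_, ?_⟩
  · by_cases hi : i = ⟨ℓ, hℓ⟩ <;> simp [hi, hs]
  · rw [← LinearIndependent.units_smul_iff _ (rowScale ℓ (Units.mk0 s hs.ne'))]
    have hscaled := hC (Units.mk0 s hs.ne')
    rw [Units.val_mk0] at hscaled
    exact hscaled ▸ hli

/-- Proposition 4.2 of the paper: for even `n = 2N`, `a ≠ 0`, `ℓ` the smallest index with
`a_{ℓ+1} ≠ 0` and `λ = ⌊ℓ/2⌋`, the functions `J_1,…,J_λ, F_{λ+1},…,F_{N−1}, H` are functionally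
independent: there is a point of the positive orthant at which their gradients are linearly
independent. -/
theorem stmt_11 (N : ℕ) (a k : Fin (2*N) → ℝ) (ha : a ≠ 0)
    (ℓ : ℕ) (hℓ : ℓ < 2*N) (hℓ1 : a ⟨ℓ, hℓ⟩ ≠ 0)
    (hℓ0 : ∀ j : Fin (2*N), j.val < ℓ → a j = 0)
    (G : Fin N → (Fin (2*N) → ℝ) → ℝ)
    (hG : ∀ p : Fin N, G p =
      if p.val < ℓ/2 then Jfun (p.val+1)
      else if p.val < N - 1 then Ffun a (p.val+1)
      else Hfun a k) :
    ∃ x : Fin (2*N) → ℝ, (∀ i, 0 < x i) ∧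
      LinearIndependent ℝ (fun p : Fin N => fun i : Fin (2*N) => pd (G p) x i) :=
  stmt_11_general N a k ℓ hℓ hℓ1 G hG
end
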